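/- Goldstein dead-end elimination criterion: fix a residue i ∈ V and two rotamers l, k ∈ D(i). If S_i(l) − S_i(k) + Σ_{j∈V, j≠i} min_{m∈D(j)} [P_{ij}(l,m) − P_{ij}(k,m)] > 0, then no energy-minimizing assignment R (i.e., no R with G(R) = min_{R'} G(R')) satisfies R(i) = l. -/

import Mathlib

open scoped BigOperators

variable {V : Type*} [Fintype V] [LinearOrder V]
  {D : V → Type*} [∀ i, Fintype (D i)] [∀ i, Nonempty (D i)]

/-- Energy of the monomer side-chain packing problem:
`G(R) = Σ_{i∈V} S_i(R(i)) + Σ_{{i,j}, i≠j} P_{ij}(R(i),R(j))`, the second sum ranging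
over unordered pairs of distinct residues (each such pair `{i,j}` represented once,
with `i < j` in a fixed linear order on `V`). -/
def energyM (S : ∀ i, D i → ℝ) (P : ∀ i j, D i → D j → ℝ) (R : ∀ i, D i) : ℝ :=
  (∑ i, S i (R i))
    + ∑ p ∈ Finset.univ.filter (fun p : V × V => p.1 < p.2), P p.1 p.2 (R p.1) (R p.2)

/-!
Replacing the rotamer `l = R(i)` of a minimizer `R` by `k` changes only the terms of `G`
that involve `i`, and lowers the energy by
`S_i(l) - S_i(k) + Σ_{j≠i} [P_ij(l, R(j)) - P_ij(k, R(j))]`.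
Each bracket is at least its minimum over `m ∈ D(j)`, so the decrease is positive by the
Goldstein criterion, contradicting minimality.
-/

theorem sum_lt_pairs_eq_sum_erase {M : Type*} [AddCommMonoid M] (g : V → V → M) (i : V)
    (hsymm : ∀ a b, g a b = g b a) (hsupp : ∀ a b, a ≠ i → b ≠ i → g a b = 0) :
    ∑ p ∈ Finset.univ.filter (fun p : V × V => p.1 < p.2), g p.1 p.2
      = ∑ j ∈ Finset.univ.erase i, g i j := by
  have hrow : ∀ a ≠ i, (∑ b, if a < b then g a b else 0) = if a < i then g i a else 0 := by
    intro a ha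
    rw [Finset.sum_eq_single i (fun b _ hb => by simp [hsupp a b ha hb]) (by simp), hsymm]
  have hfirst : (∑ b, if i < b then g i b else 0)
      = ∑ j ∈ Finset.univ.erase i, if i < j then g i j else 0 :=
    (Finset.sum_erase _ (by simp)).symm
  rw [Finset.sum_filter, Fintype.sum_prod_type, ← Finset.add_sum_erase _ _ (Finset.mem_univ i),
    Finset.sum_congr rfl fun a ha => hrow a (Finset.ne_of_mem_erase ha), hfirst,
    ← Finset.sum_add_distrib]
  refine Finset.sum_congr rfl fun j hj => ?_
  rcases lt_or_gt_of_ne (Finset.ne_of_mem_erase hj) with h | h <;> simp [h, h.not_gt]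

omit [∀ i, Fintype (D i)] [∀ i, Nonempty (D i)] in
theorem energyM_sub_energyM_update (S : ∀ i, D i → ℝ) (P : ∀ i j, D i → D j → ℝ)
    (hsymm : ∀ i j l m, P i j l m = P j i m l) (R : ∀ v, D v) (i : V) (x : D i) :
    energyM S P R - energyM S P (Function.update R i x)
      = S i (R i) - S i x + ∑ j ∈ Finset.univ.erase i, (P i j (R i) (R j) - P i j x (R j)) := by
  have hsingle : ∑ j, S j (R j) - ∑ j, S j (Function.update R i x j) = S i (R i) - S i x := by
    simp_rw [Function.apply_update S, Finset.sum_update_of_mem (Finset.mem_univ i),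
      Fintype.sum_eq_add_sum_compl i, Finset.compl_eq_univ_sdiff]
    abel
  have hpairs : ∑ p ∈ Finset.univ.filter (fun p : V × V => p.1 < p.2),
        (P p.1 p.2 (R p.1) (R p.2)
          - P p.1 p.2 (Function.update R i x p.1) (Function.update R i x p.2))
      = ∑ j ∈ Finset.univ.erase i, (P i j (R i) (R j) - P i j x (R j)) := by
    rw [sum_lt_pairs_eq_sum_erase (fun a b => P a b (R a) (R b)
        - P a b (Function.update R i x a) (Function.update R i x b)) i
      (fun a b => by rw [hsymm a b, hsymm a b])
      (fun a b ha hb => by rw [Function.update_of_ne ha, Function.update_of_ne hb, sub_self])]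
    refine Finset.sum_congr rfl fun j hj => ?_
    rw [Function.update_self, Function.update_of_ne (Finset.ne_of_mem_erase hj)]
  rw [← hsingle, ← hpairs, Finset.sum_sub_distrib, energyM, energyM]
  abel

omit [∀ i, Nonempty (D i)] in
theorem energyM_update_lt_of_goldstein (S : ∀ i, D i → ℝ) (P : ∀ i j, D i → D j → ℝ)
    (hsymm : ∀ i j l m, P i j l m = P j i m l) (R : ∀ v, D v) (i : V) (k : D i)
    (hcrit : 0 < S i (R i) - S i k
        + ∑ j ∈ Finset.univ.erase i, ⨅ m : D j, (P i j (R i) m - P i j k m)) :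
    energyM S P (Function.update R i k) < energyM S P R := by
  have hinf : ∑ j ∈ Finset.univ.erase i, ⨅ m : D j, (P i j (R i) m - P i j k m)
      ≤ ∑ j ∈ Finset.univ.erase i, (P i j (R i) (R j) - P i j k (R j)) :=
    Finset.sum_le_sum fun j _ => Finite.ciInf_le _ (R j)
  linarith [energyM_sub_energyM_update S P hsymm R i k]

/-- Goldstein dead-end elimination criterion.  Fix a residue `i ∈ V` and
rotamers `l, k ∈ D(i)`.  If
`S_i(l) − S_i(k) + Σ_{j≠i} min_{m∈D(j)} [P_{ij}(l,m) − P_{ij}(k,m)] > 0`,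
then no energy-minimizing assignment `R` satisfies `R(i) = l`. -/
theorem goldstein_dee
    (S : ∀ i, D i → ℝ) (P : ∀ i j, D i → D j → ℝ)
    (hsymm : ∀ i j l m, P i j l m = P j i m l)
    (i : V) (l k : D i)
    (hcrit : 0 < S i l - S i k
        + ∑ j ∈ Finset.univ.erase i, ⨅ m : D j, (P i j l m - P i j k m)) :
    ∀ R : ∀ v, D v, energyM S P R = (⨅ R' : ∀ v, D v, energyM S P R') → R i ≠ l := by
  rintro R hmin rfl
  exact (energyM_update_lt_of_goldstein S P hsymm R i k hcrit).not_ge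
    (hmin ▸ Finite.ciInf_le _ _)
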